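/- Let K be a positive integer and G = (V, E, d) a simple undirected graph with edge weights d : E → ℝ_{≥0}, with each edge given an arbitrary fixed orientation. There exists y : E × {1,…,K} → ℝ satisfying (i) ∑_{k ≤ K} y_{ijk}² = d_{ij}² for every edge {i,j} ∈ E, and (ii) for every cycle C in G with a closed-trail orientation W(C) and every k ≤ K, ∑_{(i,j) ∈ W(C)} (±y_{ijk}) = 0 (sign + if the edge is traversed in its fixed orientation, − otherwise), if and only if G admits a realization x : V → ℝ^K with ‖x_i − x_j‖₂ = d_{ij} for every edge {i,j} ∈ E. -/

import Mathlib

/-!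
A realization `x` yields the edge vectors `y_{ij} = x_i - x_j`, whose signed sums telescope to zero
around every closed walk. Conversely, for a skew-symmetric `y` with vanishing cycle sums, the sum
along any closed walk vanishes as well: `Walk.bypass` removes closed subwalks one at a time, and
each removed piece is an edge followed by a path back, i.e. a cycle or an edge traversed twice.
Hence sums along walks depend only on the endpoints, and summing from each vertex to a base point
of its connected component gives the coordinates of a realization.
-/

open SimpleGraph

namespace SimpleGraph.Walk

variable {V β : Type*} [AddCommGroup β] {G : SimpleGraph V}

def dartSum (f : V → V → β) {u v : V} (p : G.Walk u v) : β :=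
  (p.darts.map fun e => f e.fst e.snd).sum

variable (f : V → V → β)

@[simp]
lemma dartSum_nil {u : V} : (nil : G.Walk u u).dartSum f = 0 := by
  simp [dartSum]

@[simp]
lemma dartSum_cons {u v w : V} (h : G.Adj u v) (p : G.Walk v w) :
    (cons h p).dartSum f = f u v + p.dartSum f := by
  simp [dartSum]

@[simp]
lemma dartSum_append {u v w : V} (p : G.Walk u v) (q : G.Walk v w) :
    (p.append q).dartSum f = p.dartSum f + q.dartSum f := by
  simp [dartSum, darts_append]

@[simp]
lemma dartSum_copy {u v u' v' : V} (p : G.Walk u v) (hu : u = u') (hv : v = v') :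
    (p.copy hu hv).dartSum f = p.dartSum f := by
  simp [dartSum]

lemma dartSum_sub (g : V → β) {u v : V} (p : G.Walk u v) :
    p.dartSum (fun i j => g i - g j) = g u - g v := by
  induction p with
  | nil => simp
  | cons _ _ ih => rw [dartSum_cons, ih]; abel

variable {f}

lemma dartSum_reverse (hf : ∀ i j, G.Adj i j → f i j = -f j i) {u v : V} (p : G.Walk u v) :
    p.reverse.dartSum f = -p.dartSum f := by
  induction p with
  | nil => simp
  | cons h _ ih => simp [ih, hf _ _ h, add_comm]

lemma dartSum_cons_eq_zero_of_isPath (hf : ∀ i j, G.Adj i j → f i j = -f j i)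
    (hcyc : ∀ (a : V) (c : G.Walk a a), c.IsCycle → c.dartSum f = 0)
    {a b : V} (h : G.Adj a b) {p : G.Walk b a} (hp : p.IsPath) :
    (cons h p).dartSum f = 0 := by
  by_cases hab : s(a, b) ∈ p.edges
  · cases p with
    | nil => exact absurd rfl h.ne
    | cons h' q =>
      rw [edges_cons, List.mem_cons] at hab
      rcases hab with hab | hab
      · rcases Sym2.eq_iff.mp hab with ⟨hab, -⟩ | ⟨rfl, -⟩
        · exact absurd hab h.ne
        obtain rfl := eq_nil_iff_nil.mpr (isPath_iff_nil.mp hp.of_cons)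
        simp [hf _ _ h]
      · exact absurd (q.snd_mem_support_of_mem_edges hab) (cons_isPath_iff _ _ |>.mp hp).2
  · exact hcyc a _ ((cons_isCycle_iff p h).mpr ⟨hp, hab⟩)

lemma dartSum_bypass [DecidableEq V] (hf : ∀ i j, G.Adj i j → f i j = -f j i)
    (hcyc : ∀ (a : V) (c : G.Walk a a), c.IsCycle → c.dartSum f = 0)
    {u v : V} (p : G.Walk u v) : p.bypass.dartSum f = p.dartSum f := by
  induction p with
  | nil => rfl
  | cons h p ih =>
    simp only [bypass]
    split_ifs with hs
    · have hloop := dartSum_cons_eq_zero_of_isPath hf hcyc h (p.bypass_isPath.takeUntil hs)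
      have hsplit := congrArg (dartSum f) (p.bypass.take_spec hs)
      rw [dartSum_cons] at hloop
      rw [dartSum_append] at hsplit
      rw [dartSum_cons, ← ih, ← hsplit, ← add_assoc, hloop, zero_add]
    · rw [dartSum_cons, dartSum_cons, ih]

lemma dartSum_closed_eq_zero (hf : ∀ i j, G.Adj i j → f i j = -f j i)
    (hcyc : ∀ (a : V) (c : G.Walk a a), c.IsCycle → c.dartSum f = 0)
    {a : V} (c : G.Walk a a) : c.dartSum f = 0 := by
  classical
  rw [← dartSum_bypass hf hcyc, eq_nil_iff_nil.mpr (isPath_iff_nil.mp c.bypass_isPath),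
    dartSum_nil]

lemma dartSum_eq_of_endpoints (hf : ∀ i j, G.Adj i j → f i j = -f j i)
    (hcyc : ∀ (a : V) (c : G.Walk a a), c.IsCycle → c.dartSum f = 0)
    {u v : V} (p q : G.Walk u v) : p.dartSum f = q.dartSum f := by
  have hclosed := dartSum_closed_eq_zero hf hcyc (p.append q.reverse)
  rw [dartSum_append, dartSum_reverse hf, add_neg_eq_zero] at hclosed
  exact hclosed

end SimpleGraph.Walk

namespace SimpleGraph

variable {V β : Type*} [AddCommGroup β] {G : SimpleGraph V}

lemma exists_potential_of_dartSum_isCycle_eq_zero {f : V → V → β}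
    (hf : ∀ i j, G.Adj i j → f i j = -f j i)
    (hcyc : ∀ (a : V) (c : G.Walk a a), c.IsCycle → c.dartSum f = 0) :
    ∃ g : V → β, ∀ i j, G.Adj i j → f i j = g i - g j := by
  let base : V → V := fun v => (G.connectedComponentMk v).out
  have hreach : ∀ v, G.Reachable v (base v) := fun v =>
    ConnectedComponent.exact (G.connectedComponentMk v).out_eq.symm
  let toBase : (v : V) → G.Walk v (base v) := fun v => (hreach v).some
  refine ⟨fun v => (toBase v).dartSum f, fun i j hij => ?_⟩
  have hbase : base i = base j :=
    congrArg Quot.out (ConnectedComponent.connectedComponentMk_eq_of_adj hij)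
  have := Walk.dartSum_eq_of_endpoints hf hcyc ((toBase i).copy rfl hbase)
    (Walk.cons hij (toBase j))
  rw [Walk.dartSum_copy, Walk.dartSum_cons] at this
  exact eq_sub_of_add_eq this.symm

end SimpleGraph

theorem statement_12_general {V : Type*} (K : ℕ) (G : SimpleGraph V)
    (d : Sym2 V → ℝ) (hd : ∀ e ∈ G.edgeSet, 0 ≤ d e) :
    (∃ y : V → V → Fin K → ℝ,
      (∀ i j : V, G.Adj i j → ∀ k : Fin K, y i j k = - y j i k) ∧
      (∀ i j : V, G.Adj i j → ∑ k : Fin K, (y i j k) ^ 2 = (d s(i, j)) ^ 2) ∧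
      (∀ (a : V) (w : G.Walk a a), w.IsCycle → ∀ k : Fin K,
        (w.darts.map (fun e => y e.fst e.snd k)).sum = 0)) ↔
    (∃ x : V → Fin K → ℝ, ∀ i j : V, G.Adj i j →
      Real.sqrt (∑ k : Fin K, (x i k - x j k) ^ 2) = d s(i, j)) := by
  constructor
  · rintro ⟨y, hskew, hsq, hcyc⟩
    choose x hx using fun k : Fin K => exists_potential_of_dartSum_isCycle_eq_zero
      (f := fun i j => y i j k) (fun i j hij => hskew i j hij k)
      (fun a c hc => hcyc a c hc k)
    refine ⟨fun v k => x k v, fun i j hij => ?_⟩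
    simp only [← hx _ i j hij, hsq i j hij]
    exact Real.sqrt_sq (hd _ hij)
  · rintro ⟨x, hx⟩
    refine ⟨fun i j k => x i k - x j k, fun i j _ k => by ring, fun i j hij => ?_,
      fun a c _ k => ?_⟩
    · rw [← hx i j hij, Real.sq_sqrt (Finset.sum_nonneg fun k _ => sq_nonneg _)]
    · exact (c.dartSum_sub (fun v => x v k)).trans (sub_self _)

/-- For an edge-weighted graph `(G, d)` with `d ≥ 0`, there is an assignment
`y` on oriented edges (encoded as a skew-symmetric function on ordered adjacent pairs)
satisfying (i) `∑_k y_{ijk}² = d_{ij}²` on every edge and (ii) a vanishing signed sum along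
every cycle (cycle walk) in every coordinate, if and only if `G` admits a realization
`x : V → ℝ^K` with `‖x_i − x_j‖₂ = d_{ij}` on every edge. -/
theorem statement_12 {V : Type*} [Fintype V] (K : ℕ) (hK : 0 < K) (G : SimpleGraph V)
    (d : Sym2 V → ℝ) (hd : ∀ e ∈ G.edgeSet, 0 ≤ d e) :
    (∃ y : V → V → Fin K → ℝ,
      (∀ i j : V, G.Adj i j → ∀ k : Fin K, y i j k = - y j i k) ∧
      (∀ i j : V, G.Adj i j → ∑ k : Fin K, (y i j k) ^ 2 = (d s(i, j)) ^ 2) ∧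
      (∀ (a : V) (w : G.Walk a a), w.IsCycle → ∀ k : Fin K,
        (w.darts.map (fun e => y e.fst e.snd k)).sum = 0)) ↔
    (∃ x : V → Fin K → ℝ, ∀ i j : V, G.Adj i j →
      Real.sqrt (∑ k : Fin K, (x i k - x j k) ^ 2) = d s(i, j)) :=
  statement_12_general K G d hd
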